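/- Let V be a finite type with |V| = n ≥ 3 and let G be a simple graph on V. Then G is traversable if and only if G is biconnected. Here G is biconnected when G is connected and for every vertex w the subgraph of G induced on V \ {w} is connected; and G is traversable when for every pair of distinct vertices u, v of G there exist an enumeration v₁, v₂, …, v_n of all vertices of V with v₁ = u and v_n = v, a walk π_l of G starting at v₁, and a walk π_r of G starting at v_n, such that π_l visits every vertex of V and the first occurrences of the vertices along π_l appear in the order v₁, v₂, …, v_n, while π_r visits every vertex of V and the first occurrences of the vertices along π_r appear in the order v_n, v_{n-1}, …, v₁. -/

import Mathlib

/-- A graph is biconnected if it is connected and remains connected after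
removing any single vertex. -/
def Biconnected {V : Type*} (G : SimpleGraph V) : Prop :=
  G.Connected ∧ ∀ w : V, (G.induce ({w}ᶜ : Set V)).Connected

open List SimpleGraph

section listhelpers
variable {α : Type*} [DecidableEq α] {R : α → α → Prop}
set_option linter.unusedSectionVars false

lemma pair_sublist_indexOf {l : List α} {x y : α} (hnd : l.Nodup) (h : [x, y] <+ l) :
    l.idxOf x < l.idxOf y := by
  induction l with
  | nil => simp at h
  | cons a t ih =>
    rw [List.nodup_cons] at hnd
    cases h with
    | cons _ h' =>
      have hx : x ∈ t := h'.subset (by simp)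
      have hy : y ∈ t := h'.subset (by simp)
      have hxa : x ≠ a := fun e => hnd.1 (e ▸ hx)
      have hya : y ≠ a := fun e => hnd.1 (e ▸ hy)
      rw [List.idxOf_cons_ne _ hxa.symm, List.idxOf_cons_ne _ hya.symm]
      exact Nat.succ_lt_succ (ih hnd.2 h')
    | cons_cons _ h' =>
      have hy : y ∈ t := h'.subset (by simp)
      have hya : y ≠ x := fun e => hnd.1 (e ▸ hy)
      rw [List.idxOf_cons_self, List.idxOf_cons_ne _ hya.symm]
      exact Nat.succ_pos _

lemma chain'_tail_before {l : List α} (hc : Chain' R l) {y : α} (hy : y ∈ l.tail) :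
    ∃ z, R z y ∧ [z, y] <+ l := by
  induction l with
  | nil => simp at hy
  | cons a t ih =>
    simp only [List.tail_cons] at hy
    cases t with
    | nil => simp at hy
    | cons b t' =>
      rw [Chain', List.isChain_cons_cons] at hc
      rcases List.mem_cons.mp hy with rfl | hy'
      · exact ⟨a, hc.1, by simp⟩
      · obtain ⟨z, hz, hs⟩ := ih hc.2 hy'
        exact ⟨z, hz, hs.trans (List.sublist_cons_self _ _)⟩

lemma chain'_dropLast_after {l : List α} (hc : Chain' R l) {y : α} (hy : y ∈ l.dropLast) :
    ∃ z, R y z ∧ [y, z] <+ l := by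
  induction l with
  | nil => simp at hy
  | cons a t ih =>
    cases t with
    | nil => simp at hy
    | cons b t' =>
      rw [Chain', List.isChain_cons_cons] at hc
      rw [List.dropLast_cons₂] at hy
      rcases List.mem_cons.mp hy with rfl | hy'
      · exact ⟨b, hc.1, by simp⟩
      · obtain ⟨z, hz, hs⟩ := ih hc.2 hy'
        exact ⟨z, hz, hs.trans (List.sublist_cons_self _ _)⟩

lemma mem_pair_sublist {l₁ l₂ : List α} {x y : α} (hx : x ∈ l₁) (hy : y ∈ l₂) :
    [x, y] <+ l₁ ++ l₂ := by
  have h1 : [x] <+ l₁ := List.singleton_sublist.mpr hx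
  have h2 : [y] <+ l₂ := List.singleton_sublist.mpr hy
  simpa using h1.append h2

lemma pair_sublist_or {l : List α} {x y : α} (hx : x ∈ l) (hy : y ∈ l) (hxy : x ≠ y) :
    [x, y] <+ l ∨ [y, x] <+ l := by
  induction l with
  | nil => simp at hx
  | cons a t ih =>
    rcases List.mem_cons.mp hx with rfl | hx'
    · have hy' : y ∈ t := by
        rcases List.mem_cons.mp hy with rfl | h
        · exact absurd rfl hxy
        · exact h
      exact Or.inl (List.cons_sublist_cons.mpr (List.singleton_sublist.mpr hy'))
    · rcases List.mem_cons.mp hy with rfl | hy'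
      · exact Or.inr (List.cons_sublist_cons.mpr (List.singleton_sublist.mpr hx'))
      · rcases ih hx' hy' with h | h
        · exact Or.inl (h.trans (List.sublist_cons_self _ _))
        · exact Or.inr (h.trans (List.sublist_cons_self _ _))

lemma pair_sublist_split {l : List α} {a b : α} (h : [a, b] <+ l) :
    ∃ l₁ l₂, l = l₁ ++ a :: l₂ ∧ b ∈ l₂ := by
  induction l with
  | nil => simp at h
  | cons c t ih =>
    cases h with
    | cons _ h' =>
      obtain ⟨l₁, l₂, rfl, hb⟩ := ih h'
      exact ⟨c :: l₁, l₂, rfl, hb⟩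
    | cons_cons _ h' =>
      exact ⟨[], t, rfl, List.singleton_sublist.mp h'⟩

lemma length_le_indexOf_append {l₁ l₂ : List α} {a : α} (h : a ∉ l₁) :
    l₁.length ≤ (l₁ ++ l₂).idxOf a := by
  induction l₁ with
  | nil => simp
  | cons c t ih =>
    have hca : a ≠ c := fun e => h (e ▸ List.mem_cons_self)
    rw [List.cons_append, List.length_cons, List.idxOf_cons_ne _ hca.symm]
    exact Nat.succ_le_succ (ih (fun hm => h (List.mem_cons_of_mem _ hm)))

end listhelpers

section goodlist
variable {V : Type*} [DecidableEq V] {G : SimpleGraph V}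

def GoodList (G : SimpleGraph V) (s t : V) (L : List V) : Prop :=
  L.Nodup ∧ L.head? = some s ∧ L.getLast? = some t ∧
  (∀ y ∈ L, y ≠ s → ∃ z, G.Adj z y ∧ [z, y] <+ L) ∧
  (∀ y ∈ L, y ≠ t → ∃ z, G.Adj y z ∧ [y, z] <+ L)

lemma goodList_base (hG : G.Connected) (s t : V) : ∃ L, GoodList G s t L := by
  obtain ⟨w⟩ := hG.preconnected s t
  set p := w.toPath with hp
  refine ⟨p.1.support, p.2.support_nodup, ?_, ?_, ?_, ?_⟩
  · rw [p.1.support_eq_cons]; rfl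
  · rw [List.getLast?_eq_getLast p.1.support_ne_nil, p.1.getLast_support]
  · intro y hy hys
    have hyt : y ∈ p.1.support.tail := by
      rw [p.1.support_eq_cons] at hy
      rcases List.mem_cons.mp hy with rfl | h
      · exact absurd rfl hys
      · exact h
    exact chain'_tail_before p.1.isChain_adj_support hyt
  · intro y hy hyt
    have hyd : y ∈ p.1.support.dropLast := by
      have hne := p.1.support_ne_nil
      rw [← List.dropLast_append_getLast hne] at hy
      rcases List.mem_append.mp hy with h | h
      · exact h
      · exfalso
        rw [List.mem_singleton] at h
        rw [h, p.1.getLast_support] at hyt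
        exact hyt rfl
    exact chain'_dropLast_after p.1.isChain_adj_support hyd

lemma exists_crossing_of_walk {L : List V} : ∀ {x c : V}, G.Walk x c → x ∉ L → c ∈ L →
    ∃ x' a, x' ∉ L ∧ a ∈ L ∧ G.Adj x' a := by
  intro x c w
  induction w with
  | nil => intro hx hc; exact absurd hc hx
  | @cons a d b h p ih =>
    intro hx hc
    by_cases hd : d ∈ L
    · exact ⟨a, d, hx, hd, h⟩
    · exact ih hd hc

lemma truncate_walk {L : List V} : ∀ {x c : V} (p : G.Walk x c), c ∈ L →
    ∃ b : V, ∃ q : G.Walk x b, b ∈ L ∧ (∀ y ∈ q.support, y ∈ L → y = b) ∧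
      (∀ y ∈ q.support, y ∈ p.support) := by
  intro x c p
  induction p with
  | nil =>
    intro hc
    exact ⟨_, Walk.nil, hc, by intro y hy _; simpa using hy, by intro y hy; exact hy⟩
  | @cons a d b h p ih =>
    intro hc
    by_cases ha : a ∈ L
    · exact ⟨a, Walk.nil, ha, by intro y hy _; simpa using hy,
        by intro y hy; simp at hy; subst hy; exact Walk.start_mem_support _⟩
    · obtain ⟨b', q', hb', hfirst, hsub⟩ := ih hc
      refine ⟨b', Walk.cons h q', hb', ?_, ?_⟩
      · intro y hy hyL
        rw [Walk.support_cons, List.mem_cons] at hy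
        rcases hy with rfl | hy
        · exact absurd hyL ha
        · exact hfirst y hy hyL
      · intro y hy
        rw [Walk.support_cons, List.mem_cons] at hy
        rw [Walk.support_cons, List.mem_cons]
        rcases hy with rfl | hy
        · exact Or.inl rfl
        · exact Or.inr (hsub y hy)
end goodlist

section more
variable {V : Type*} [DecidableEq V] {G : SimpleGraph V}


lemma induce_adj' {S : Set V} {a b : ↥S} (h : G.Adj a.val b.val) : (G.induce S).Adj a b := by
  simp only [SimpleGraph.comap_adj, Function.Embedding.coe_subtype]
  exact h

lemma adj_of_induce_adj {S : Set V} {a b : ↥S} (h : (G.induce S).Adj a b) : G.Adj a.val b.val := by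
  simpa only [SimpleGraph.comap_adj, Function.Embedding.coe_subtype] using h

lemma reachable_induce_of_walk {S : Set V} : ∀ {x y : V} (w : G.Walk x y)
    (_ : ∀ z ∈ w.support, z ∈ S) (hx : x ∈ S) (hy : y ∈ S),
    (G.induce S).Reachable ⟨x, hx⟩ ⟨y, hy⟩ := by
  intro x y w
  induction w with
  | nil => intro _ _ _; rfl
  | @cons a c b h p ih =>
    intro hS ha hb
    have hc : c ∈ S := hS c (by simp [SimpleGraph.Walk.support_cons])
    have h1 : (G.induce S).Adj ⟨a, ha⟩ ⟨c, hc⟩ := induce_adj' h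
    exact h1.reachable.trans (ih (fun z hz => hS z (by simp [SimpleGraph.Walk.support_cons, hz])) hc hb)

lemma exists_walk_of_induce_walk {S : Set V} : ∀ (a b : ↥S) (w : (G.induce S).Walk a b),
    ∃ w' : G.Walk a.val b.val, ∀ z ∈ w'.support, z ∈ S := by
  intro a b w
  induction w with
  | nil => exact ⟨SimpleGraph.Walk.nil, by intro z hz; simp at hz; subst hz; exact Subtype.coe_prop _⟩
  | @cons a c b h p ih =>
    obtain ⟨w', hw'⟩ := ih
    exact ⟨SimpleGraph.Walk.cons (adj_of_induce_adj h) w', by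
      intro z hz
      rw [SimpleGraph.Walk.support_cons, List.mem_cons] at hz
      rcases hz with rfl | hz
      · exact a.2
      · exact hw' z hz⟩

lemma goodList_insert_oriented {s t : V} {L : List V} (hL : GoodList G s t L)
    {a b : V} {C : List V}
    (hchain : Chain' G.Adj (a :: (C ++ [b])))
    (hCnd : C.Nodup) (hCdisj : ∀ y ∈ C, y ∉ L)
    (hab : [a, b] <+ L) :
    ∃ L', GoodList G s t L' ∧ L <+ L' ∧ L.length + C.length = L'.length := by
  obtain ⟨L₁, L₂, rfl, hbL₂⟩ := pair_sublist_split hab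
  obtain ⟨hnd, hhead, hlast, hbefore, hafter⟩ := hL
  have hC' : ∀ y ∈ C, ¬(y ∈ L₁ ∨ y = a ∨ y ∈ L₂) := by
    intro y hy
    have := hCdisj y hy
    simpa using this
  have hsubL : (L₁ ++ a :: L₂) <+ (L₁ ++ a :: (C ++ L₂)) :=
    List.Sublist.append_left ((List.sublist_append_right C L₂).cons₂ a) L₁
  have hS : (a :: (C ++ [b])) <+ (L₁ ++ a :: (C ++ L₂)) := by
    have s1 : (a :: (C ++ [b])) <+ (a :: (C ++ L₂)) :=
      (List.Sublist.append_left (List.singleton_sublist.mpr hbL₂) C).cons₂ a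
    exact s1.trans (List.sublist_append_right _ _)
  have hL₂ne : L₂ ≠ [] := fun h => by subst h; simp at hbL₂
  refine ⟨L₁ ++ a :: (C ++ L₂), ⟨?_, ?_, ?_, ?_, ?_⟩, hsubL, ?_⟩
  · -- Nodup
    rw [List.nodup_middle] at hnd ⊢
    rw [List.nodup_cons] at hnd ⊢
    refine ⟨?_, ?_⟩
    · intro hmem
      rcases List.mem_append.mp hmem with h | h
      · exact hnd.1 (List.mem_append_left _ h)
      · rcases List.mem_append.mp h with h | h
        · exact hC' a h (Or.inr (Or.inl rfl))
        · exact hnd.1 (List.mem_append_right _ h)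
    · have hnd2 := hnd.2
      rw [List.nodup_append] at hnd2
      rw [List.nodup_append, List.nodup_append]
      refine ⟨hnd2.1, ⟨hCnd, hnd2.2.1, ?_⟩, ?_⟩
      · intro y hyC z hyL₂ hyz; subst hyz
        exact hC' y hyC (Or.inr (Or.inr hyL₂))
      · intro y hyL₁ z hmem hyz; subst hyz
        rcases List.mem_append.mp hmem with h | h
        · exact hC' y h (Or.inl hyL₁)
        · exact hnd2.2.2 _ hyL₁ _ h rfl
  · -- head?
    cases L₁ with
    | nil => simpa using hhead
    | cons h t => simpa using hhead
  · -- getLast?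
    have e1 : (L₁ ++ a :: (C ++ L₂)).getLast? = L₂.getLast? := by
      rw [show L₁ ++ a :: (C ++ L₂) = (L₁ ++ a :: C) ++ L₂ by simp, List.getLast?_append,
        List.getLast?_eq_getLast hL₂ne]
      rfl
    have e2 : (L₁ ++ a :: L₂).getLast? = L₂.getLast? := by
      rw [show L₁ ++ a :: L₂ = (L₁ ++ [a]) ++ L₂ by simp, List.getLast?_append,
        List.getLast?_eq_getLast hL₂ne]
      rfl
    rw [e1, ← e2, hlast]
  · -- before
    intro y hy hys
    have hmem : y ∈ (L₁ ++ a :: L₂) ∨ y ∈ C := by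
      simp only [List.mem_append, List.mem_cons] at hy ⊢
      tauto
    rcases hmem with h | h
    · obtain ⟨z, hz, hp⟩ := hbefore y h hys
      exact ⟨z, hz, hp.trans hsubL⟩
    · have : y ∈ (a :: (C ++ [b])).tail := List.mem_append_left _ h
      obtain ⟨z, hz, hp⟩ := chain'_tail_before hchain this
      exact ⟨z, hz, hp.trans hS⟩
  · -- after
    intro y hy hyt
    have hmem : y ∈ (L₁ ++ a :: L₂) ∨ y ∈ C := by
      simp only [List.mem_append, List.mem_cons] at hy ⊢
      tauto
    rcases hmem with h | h
    · obtain ⟨z, hz, hp⟩ := hafter y h hyt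
      exact ⟨z, hz, hp.trans hsubL⟩
    · have hdl : y ∈ (a :: (C ++ [b])).dropLast := by
        rw [show a :: (C ++ [b]) = (a :: C) ++ [b] by simp, List.dropLast_concat]
        exact List.mem_cons_of_mem _ h
      obtain ⟨z, hz, hp⟩ := chain'_dropLast_after hchain hdl
      exact ⟨z, hz, hp.trans hS⟩
  · simp; omega

lemma goodList_insert {s t : V} {L : List V} (hL : GoodList G s t L)
    {a b : V} {C : List V}
    (hchain : Chain' G.Adj (a :: (C ++ [b])))
    (ha : a ∈ L) (hb : b ∈ L) (hne : a ≠ b)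
    (hCnd : C.Nodup) (hCdisj : ∀ y ∈ C, y ∉ L) :
    ∃ L', GoodList G s t L' ∧ L <+ L' ∧ L.length + C.length = L'.length := by
  rcases pair_sublist_or ha hb hne with h | h
  · exact goodList_insert_oriented hL hchain hCnd hCdisj h
  · have hchain' : Chain' G.Adj (b :: (C.reverse ++ [a])) := by
      have hrev : (a :: (C ++ [b])).reverse = b :: (C.reverse ++ [a]) := by simp
      rw [← hrev, Chain', List.isChain_reverse]
      exact hchain.imp fun x y hxy => hxy.symm
    obtain ⟨L', h1, h2, h3⟩ := goodList_insert_oriented hL hchain' (by simpa using hCnd)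
      (fun y hy => hCdisj y (by simpa using hy)) h
    exact ⟨L', h1, h2, by simpa using h3⟩

end more

section step
variable {V : Type*} [DecidableEq V] {G : SimpleGraph V}
set_option linter.unusedSectionVars false

lemma goodList_step [Fintype V] (hbc : Biconnected G) {s t : V} (hst : s ≠ t)
    {L : List V} (hL : GoodList G s t L) {v : V} (hv : v ∉ L) :
    ∃ L', GoodList G s t L' ∧ L.length < L'.length := by
  classical
  have hsL : s ∈ L := List.mem_of_mem_head? (by rw [hL.2.1]; rfl)
  have htL : t ∈ L := List.mem_of_mem_getLast? (by rw [hL.2.2.1]; rfl)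
  -- find a crossing edge
  obtain ⟨w0⟩ := hbc.1.preconnected v s
  obtain ⟨x, a, hx, haL, hadj⟩ := exists_crossing_of_walk w0 hv hsL
  -- target vertex t' in L, distinct from a
  set t' : V := if a = t then s else t with ht'def
  have ht'L : t' ∈ L := by rw [ht'def]; split <;> assumption
  have ht'a : t' ≠ a := by
    rw [ht'def]; split
    · rename_i h; rw [h]; exact hst
    · rename_i h; exact fun hh => h hh.symm
  have hxa : x ≠ a := fun h => hx (h ▸ haL)
  have hxS : x ∈ ({a}ᶜ : Set V) := by simpa using hxa
  have ht'S : t' ∈ ({a}ᶜ : Set V) := by simpa using ht'a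
  obtain ⟨w1⟩ := (hbc.2 a).preconnected ⟨x, hxS⟩ ⟨t', ht'S⟩
  obtain ⟨wG, hwG⟩ := exists_walk_of_induce_walk _ _ w1
  obtain ⟨b, q, hbL, hfirst, hsub⟩ := truncate_walk wG ht'L
  have haq : a ∉ q.support := by
    intro h
    have := hwG a (hsub a h)
    simp at this
  set P := q.toPath with hPdef
  have hPsub : P.1.support ⊆ q.support := SimpleGraph.Walk.support_toPath_subset q
  have hPnd : P.1.support.Nodup := P.2.support_nodup
  have hPne : P.1.support ≠ [] := SimpleGraph.Walk.support_ne_nil _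
  have hsupp_eq : P.1.support.dropLast ++ [b] = P.1.support := by
    have h1 := List.dropLast_append_getLast hPne
    rwa [SimpleGraph.Walk.getLast_support] at h1
  set C := P.1.support.dropLast with hCdef
  have hCnd : C.Nodup := (List.dropLast_sublist _).nodup hPnd
  have hbC : b ∉ C := by
    intro h
    have := hsupp_eq ▸ hPnd
    rw [List.nodup_append] at this
    exact this.2.2 _ h _ (by simp) rfl
  have hCdisj : ∀ y ∈ C, y ∉ L := by
    intro y hy hyL
    have hyP : y ∈ P.1.support := (List.dropLast_sublist _).subset hy
    have := hfirst y (hPsub hyP) hyL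
    exact hbC (this ▸ hy)
  have haC : a ∉ C := fun h => haq (hPsub ((List.dropLast_sublist _).subset h))
  have hab : a ≠ b := by
    intro h
    exact haq (h ▸ q.end_mem_support)
  have hCne : C ≠ [] := by
    intro h
    have hxP : x ∈ P.1.support := SimpleGraph.Walk.start_mem_support _
    rw [← hsupp_eq, h, List.nil_append, List.mem_singleton] at hxP
    exact hx (hxP ▸ hbL)
  have hchain : Chain' G.Adj (a :: (C ++ [b])) := by
    rw [hsupp_eq]
    rw [Chain', List.isChain_cons]
    constructor
    · intro y hy
      rw [SimpleGraph.Walk.support_eq_cons] at hy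
      simp only [List.head?_cons, Option.mem_def, Option.some.injEq] at hy
      exact hy ▸ hadj.symm
    · exact SimpleGraph.Walk.isChain_adj_support _
  obtain ⟨L', hL', _, hlen⟩ := goodList_insert hL hchain haL hbL hab hCnd hCdisj
  refine ⟨L', hL', ?_⟩
  have : 0 < C.length := List.length_pos_iff.mpr hCne
  omega

lemma goodList_full [Fintype V] (hbc : Biconnected G) {s t : V} (hst : s ≠ t) :
    ∃ L, GoodList G s t L ∧ ∀ v : V, v ∈ L := by
  obtain ⟨L₀, hL₀⟩ := goodList_base hbc.1 s t
  suffices h : ∀ (m : ℕ) (L : List V), GoodList G s t L → Fintype.card V ≤ L.length + m →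
      ∃ L', GoodList G s t L' ∧ ∀ v : V, v ∈ L' by
    exact h (Fintype.card V) L₀ hL₀ (by omega)
  intro m
  induction m with
  | zero =>
    intro L hL hcard
    refine ⟨L, hL, ?_⟩
    have hc : L.toFinset.card = Fintype.card V := le_antisymm (Finset.card_le_univ _)
      (by rw [List.toFinset_card_of_nodup hL.1]; omega)
    have huniv := Finset.eq_univ_of_card _ hc
    intro v
    have : v ∈ L.toFinset := huniv ▸ Finset.mem_univ v
    simpa using this
  | succ m ih =>
    intro L hL hcard
    by_cases hall : ∀ v : V, v ∈ L
    · exact ⟨L, hL, hall⟩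
    · push_neg at hall
      obtain ⟨v, hv⟩ := hall
      obtain ⟨L', hL', hlen⟩ := goodList_step hbc hst hL hv
      exact ih L' hL' (by omega)

end step

section walkbuild
open SimpleGraph
variable {V : Type*} [DecidableEq V] {G : SimpleGraph V}
set_option linter.unusedSectionVars false

lemma exists_traversal_walk {n : ℕ} (hn : 0 < n) (G : SimpleGraph V) (e : Fin n ≃ V)
    (hnb : ∀ j : Fin n, 0 < j.val → ∃ i : Fin n, i < j ∧ G.Adj (e i) (e j)) :
    ∃ x : V, ∃ π : G.Walk (e ⟨0, hn⟩) x, (∀ i : Fin n, e i ∈ π.support) ∧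
      ∀ i j : Fin n, i < j → π.support.idxOf (e i) < π.support.idxOf (e j) := by
  set u : V := e ⟨0, hn⟩ with hu
  have R : ∀ m : ℕ, ∀ k : Fin n, k.val = m → ∃ w : G.Walk u (e k),
      ∀ z ∈ w.support, ∃ i : Fin n, i ≤ k ∧ z = e i := by
    intro m
    induction m using Nat.strong_induction_on with
    | _ m ih =>
      intro k hk
      rcases Nat.eq_zero_or_pos m with rfl | hpos
      · obtain rfl : k = ⟨0, hn⟩ := Fin.ext (by simp; omega)
        refine ⟨SimpleGraph.Walk.nil, ?_⟩
        intro z hz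
        simp at hz
        exact ⟨⟨0, hn⟩, le_refl _, hz⟩
      · obtain ⟨i, hilt, hadj⟩ := hnb k (by omega)
        obtain ⟨w, hw⟩ := ih i.val (by omega) i rfl
        refine ⟨w.concat hadj, ?_⟩
        intro z hz
        rw [SimpleGraph.Walk.support_concat, List.mem_append] at hz
        rcases hz with hz | hz
        · obtain ⟨i', hi', rfl⟩ := hw z hz
          exact ⟨i', le_trans hi' (le_of_lt hilt), rfl⟩
        · simp at hz
          exact ⟨k, le_refl _, hz⟩
  have M : ∀ m : ℕ, ∀ k : Fin n, k.val = m → ∃ w : G.Walk u (e k),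
      (∀ z ∈ w.support, ∃ i : Fin n, i ≤ k ∧ z = e i) ∧
      (∀ i : Fin n, i ≤ k → e i ∈ w.support) ∧
      (∀ i j : Fin n, i < j → j ≤ k → w.support.idxOf (e i) < w.support.idxOf (e j)) := by
    intro m
    induction m with
    | zero =>
      intro k hk
      obtain rfl : k = ⟨0, hn⟩ := Fin.ext (by simp; omega)
      refine ⟨SimpleGraph.Walk.nil, ?_, ?_, ?_⟩
      · intro z hz
        simp at hz
        exact ⟨⟨0, hn⟩, le_refl _, hz⟩
      · intro i hi
        obtain rfl : i = ⟨0, hn⟩ := Fin.ext (by simp; have : i.val ≤ 0 := hi; omega)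
        simp [hu]
      · intro i j hij hj
        exfalso
        have h1 : j.val ≤ 0 := hj
        have h2 : i.val < j.val := hij
        omega
    | succ m ihm =>
      intro k hk
      have hm : m < n := by omega
      obtain ⟨w, hP1, hP2, hP3⟩ := ihm ⟨m, hm⟩ rfl
      obtain ⟨i₀, hi₀lt, hadj⟩ := hnb k (by omega)
      have hi₀le : i₀ ≤ (⟨m, hm⟩ : Fin n) := by
        have h1 : i₀.val < k.val := hi₀lt
        show i₀.val ≤ m
        omega
      obtain ⟨w₁, hw₁⟩ := R m ⟨m, hm⟩ rfl
      obtain ⟨w₂, hw₂⟩ := R i₀.val i₀ rfl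
      set wmid : G.Walk u (e i₀) := w.append (w₁.reverse.append w₂) with hwmid
      have hA : wmid.support = w.support ++ (w₁.reverse.append w₂).support.tail :=
        SimpleGraph.Walk.support_append _ _
      have hbound : ∀ z ∈ wmid.support, ∃ i : Fin n, i ≤ (⟨m, hm⟩ : Fin n) ∧ z = e i := by
        intro z hz
        rw [hA, List.mem_append] at hz
        rcases hz with hz | hz
        · exact hP1 z hz
        · have hz' : z ∈ (w₁.reverse.append w₂).support := (List.tail_sublist _).subset hz
          rw [SimpleGraph.Walk.support_append, List.mem_append] at hz'
          rcases hz' with hz' | hz'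
          · rw [SimpleGraph.Walk.support_reverse, List.mem_reverse] at hz'
            exact hw₁ z hz'
          · obtain ⟨i, hi, rfl⟩ := hw₂ z ((List.tail_sublist _).subset hz')
            exact ⟨i, hi.trans hi₀le, rfl⟩
      have hknot : e k ∉ wmid.support := by
        intro h
        obtain ⟨i, hi, heq⟩ := hbound _ h
        have : k = i := e.injective heq
        subst this
        have : k.val ≤ m := hi
        omega
      refine ⟨wmid.concat hadj, ?_, ?_, ?_⟩
      · intro z hz
        rw [SimpleGraph.Walk.support_concat, List.mem_append] at hz
        rcases hz with hz | hz
        · obtain ⟨i, hi, rfl⟩ := hbound z hz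
          refine ⟨i, ?_, rfl⟩
          show i.val ≤ k.val
          have : i.val ≤ m := hi
          omega
        · simp at hz
          exact ⟨k, le_refl _, hz⟩
      · intro i hi
        rw [SimpleGraph.Walk.support_concat, List.mem_append]
        have hi' : i.val ≤ m + 1 := by rw [← hk]; exact hi
        rcases Nat.lt_or_ge i.val (m + 1) with h | h
        · left
          have : e i ∈ w.support := hP2 i (by show i.val ≤ m; omega)
          rw [hA]
          exact List.mem_append_left _ this
        · right
          obtain rfl : i = k := Fin.ext (by omega)
          simp
      · intro i j hij hj
        rw [SimpleGraph.Walk.support_concat]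
        have hj' : j.val ≤ m + 1 := by rw [← hk]; exact hj
        rcases Nat.lt_or_ge j.val (m + 1) with h | h
        · -- both in w.support
          have hiw : e i ∈ w.support := hP2 i (by show i.val ≤ m; have : i.val < j.val := hij; omega)
          have hjw : e j ∈ w.support := hP2 j (by show j.val ≤ m; omega)
          rw [hA, List.append_assoc, List.idxOf_append_of_mem hiw, List.idxOf_append_of_mem hjw]
          exact hP3 i j hij (by show j.val ≤ m; omega)
        · obtain rfl : j = k := Fin.ext (by omega)
          have hiw : e i ∈ wmid.support := by
            rw [hA]
            exact List.mem_append_left _ (hP2 i (by show i.val ≤ m; have : i.val < j.val := hij; omega))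
          have h1 : (wmid.support ++ [e j]).idxOf (e i) = wmid.support.idxOf (e i) :=
            List.idxOf_append_of_mem hiw
          have h2 : wmid.support.length ≤ (wmid.support ++ [e j]).idxOf (e j) :=
            length_le_indexOf_append hknot
          have h3 : wmid.support.idxOf (e i) < wmid.support.length :=
            List.idxOf_lt_length_iff.mpr hiw
          omega
  obtain ⟨w, hP1, hP2, hP3⟩ := M (n - 1) ⟨n - 1, by omega⟩ rfl
  refine ⟨e ⟨n - 1, by omega⟩, w, ?_, ?_⟩
  · intro i
    exact hP2 i (by show i.val ≤ n - 1; have := i.isLt; omega)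
  · intro i j hij
    exact hP3 i j hij (by show j.val ≤ n - 1; have := j.isLt; omega)
end walkbuild

section final
open SimpleGraph List
variable {V : Type*} [DecidableEq V] {G : SimpleGraph V}
set_option linter.unusedSectionVars false

lemma takeUntil_avoids {u x w z : V} (p : G.Walk u x) (hz : z ∈ p.support)
    (hlt : p.support.idxOf z < p.support.idxOf w) :
    w ∉ (p.takeUntil z hz).support := by
  intro hw
  set T := (p.takeUntil z hz).support with hT
  have h2 : T ++ (p.dropUntil z hz).support.tail = p.support := by
    rw [hT, ← SimpleGraph.Walk.support_append, SimpleGraph.Walk.take_spec]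
  have hTne : T ≠ [] := SimpleGraph.Walk.support_ne_nil _
  have hTlast : T.getLast hTne = z := SimpleGraph.Walk.getLast_support _
  have hTeq : T.dropLast ++ [z] = T := by
    rw [← hTlast]; exact List.dropLast_append_getLast hTne
  have hzT : z ∈ T := (p.takeUntil z hz).end_mem_support
  have hcount : List.count z T = 1 := SimpleGraph.Walk.count_support_takeUntil_eq_one p hz
  have hznotd : z ∉ T.dropLast := by
    have hc2 : List.count z (T.dropLast ++ [z]) = 1 := by rw [hTeq]; exact hcount
    rw [List.count_append] at hc2
    have hc3 : List.count z T.dropLast = 0 := by simp at hc2 ⊢; omega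
    exact List.count_eq_zero.mp hc3
  have hge : T.dropLast.length ≤ (T.dropLast ++ [z]).idxOf z := length_le_indexOf_append hznotd
  rw [hTeq] at hge
  have hidxzlt : T.idxOf z < T.length := List.idxOf_lt_length_iff.mpr hzT
  have hidxw : T.idxOf w < T.length := List.idxOf_lt_length_iff.mpr hw
  have hTlen : T.length = T.dropLast.length + 1 := by rw [← hTeq]; simp
  have e1 : p.support.idxOf w = T.idxOf w := by
    rw [← h2, List.idxOf_append_of_mem hw]
  have e2 : p.support.idxOf z = T.idxOf z := by
    rw [← h2, List.idxOf_append_of_mem hzT]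
  omega

end final

theorem traversable_iff_biconnected {V : Type*} [Fintype V] [DecidableEq V]
    (n : ℕ) (hn : Fintype.card V = n) (hn3 : 3 ≤ n) (G : SimpleGraph V) :
    (∀ u v : V, u ≠ v →
      ∃ e : Fin n ≃ V, e ⟨0, by omega⟩ = u ∧ e ⟨n - 1, by omega⟩ = v ∧
        (∃ x : V, ∃ πl : G.Walk u x,
          (∀ w : V, w ∈ πl.support) ∧
          (∀ i j : Fin n, i < j →
            πl.support.idxOf (e i) < πl.support.idxOf (e j))) ∧
        (∃ y : V, ∃ πr : G.Walk v y,
          (∀ w : V, w ∈ πr.support) ∧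
          (∀ i j : Fin n, i < j →
            πr.support.idxOf (e j) < πr.support.idxOf (e i)))) ↔
    Biconnected G := by
  have hnpos : 0 < n := by omega
  constructor
  · -- traversable → biconnected
    intro htrav
    have hnt : Nontrivial V := Fintype.one_lt_card_iff_nontrivial.mp (by omega)
    constructor
    · rw [SimpleGraph.connected_iff]
      refine ⟨?_, Fintype.card_pos_iff.mp (by omega)⟩
      intro a b
      by_cases hab : a = b
      · rw [hab]
      · obtain ⟨e, he0, hel, ⟨x, πl, hcov, hord⟩, -⟩ := htrav a b hab
        exact ⟨πl.takeUntil b (hcov b)⟩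
    · intro w
      obtain ⟨u0, hu0⟩ := exists_ne w
      obtain ⟨e, he0, hel, ⟨x, πl, hcov, hord⟩, -⟩ := htrav u0 w hu0
      have hreach : ∀ z : V, z ≠ w → ∃ q : G.Walk u0 z, ∀ y ∈ q.support, y ∈ ({w}ᶜ : Set V) := by
        intro z hzw
        have hz : z ∈ πl.support := hcov z
        have hlt : πl.support.idxOf z < πl.support.idxOf w := by
          set i := e.symm z with hi
          have hiz : e i = z := e.apply_symm_apply z
          have hine : i ≠ ⟨n - 1, by omega⟩ := by
            intro h
            rw [h, hel] at hiz
            exact hzw hiz.symm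
          have hilt : i < (⟨n - 1, by omega⟩ : Fin n) := by
            refine lt_of_le_of_ne ?_ hine
            show i.val ≤ n - 1
            have := i.isLt
            omega
          have h2 := hord i _ hilt
          rwa [hiz, hel] at h2
        have hnot := takeUntil_avoids πl hz hlt
        refine ⟨πl.takeUntil z hz, fun y hy => ?_⟩
        simp only [Set.mem_compl_iff, Set.mem_singleton_iff]
        intro h
        exact hnot (h ▸ hy)
      rw [SimpleGraph.connected_iff]
      refine ⟨?_, ⟨⟨u0, by simpa using hu0⟩⟩⟩
      intro a b
      have ra : ∀ c : ↥({w}ᶜ : Set V),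
          (G.induce ({w}ᶜ : Set V)).Reachable ⟨u0, by simpa using hu0⟩ c := by
        intro c
        obtain ⟨q, hq⟩ := hreach c.val (Set.mem_compl_singleton_iff.mp c.2)
        exact reachable_induce_of_walk q hq _ c.2
      exact (ra a).symm.trans (ra b)
  · -- biconnected → traversable
    intro hbc u v huv
    obtain ⟨L, hL, hall⟩ := goodList_full hbc huv
    have htof : L.toFinset = Finset.univ := Finset.eq_univ_iff_forall.mpr (by simpa using hall)
    have hlen : L.length = n := by
      rw [← List.toFinset_card_of_nodup hL.1, htof, ← hn]
      rfl
    set f : Fin n → V := fun i => L.get ⟨i.val, by rw [hlen]; exact i.isLt⟩ with hf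
    have hinj : Function.Injective f := by
      intro i j hij
      have h1 := List.nodup_iff_injective_get.mp hL.1 hij
      have h2 := congrArg (fun x : Fin L.length => x.val) h1
      exact Fin.ext h2
    have hsurj : Function.Surjective f := by
      intro z
      obtain ⟨i, hi⟩ := List.mem_iff_get.mp (hall z)
      exact ⟨⟨i.val, by rw [← hlen]; exact i.isLt⟩, hi⟩
    set e : Fin n ≃ V := Equiv.ofBijective f ⟨hinj, hsurj⟩ with he
    have heget : ∀ i : Fin n, e i = L.get ⟨i.val, by rw [hlen]; exact i.isLt⟩ := fun i => rfl
    have hidx : ∀ j : Fin n, L.idxOf (e j) = j.val := by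
      intro j
      rw [heget]
      exact List.get_idxOf hL.1 _
    have hLne : L ≠ [] := List.ne_nil_of_length_pos (by omega)
    have he0 : e ⟨0, hnpos⟩ = u := by
      have hh : L.head hLne = u := by
        have h1 := hL.2.1
        rw [List.head?_eq_head hLne] at h1
        exact Option.some.inj h1
      rw [heget, ← hh]
      exact List.get_mk_zero _
    have hel : e ⟨n - 1, by omega⟩ = v := by
      have h1 : L.getLast hLne = v := by
        have h2 := hL.2.2.1
        rw [List.getLast?_eq_getLast hLne] at h2
        exact Option.some.inj h2
      have hTeq : L.dropLast ++ [v] = L := by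
        rw [← h1]; exact List.dropLast_append_getLast hLne
      have hvd : v ∉ L.dropLast := by
        intro h
        have hnd : (L.dropLast ++ [v]).Nodup := by rw [hTeq]; exact hL.1
        rw [List.nodup_append] at hnd
        exact hnd.2.2 _ h _ (by simp) rfl
      have hge : L.dropLast.length ≤ (L.dropLast ++ [v]).idxOf v := length_le_indexOf_append hvd
      rw [hTeq] at hge
      have hltv : L.idxOf v < L.length := List.idxOf_lt_length_iff.mpr (hall v)
      have hdl : L.dropLast.length = L.length - 1 := by simp
      have hiv : L.idxOf v = n - 1 := by omega
      have hgv := List.idxOf_get hltv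
      rw [heget, ← hgv]
      congr 1
      exact Fin.ext (by simp [hiv])
    have hl : ∀ j : Fin n, 0 < j.val → ∃ i : Fin n, i < j ∧ G.Adj (e i) (e j) := by
      intro j hj
      have hyL : e j ∈ L := hall _
      have hyne : e j ≠ u := by
        intro h
        rw [← he0] at h
        have h1 := e.injective h
        rw [h1] at hj
        simp at hj
      obtain ⟨z, hz, hp⟩ := hL.2.2.2.1 (e j) hyL hyne
      have hzL : z ∈ L := hp.subset (by simp)
      have hzlt : L.idxOf z < L.length := List.idxOf_lt_length_iff.mpr hzL
      refine ⟨⟨L.idxOf z, by rw [← hlen]; exact hzlt⟩, ?_, ?_⟩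
      · show L.idxOf z < j.val
        have h1 := pair_sublist_indexOf hL.1 hp
        rwa [hidx j] at h1
      · have h1 : e ⟨L.idxOf z, by rw [← hlen]; exact hzlt⟩ = z := by
          rw [heget]
          exact List.idxOf_get hzlt
        rw [h1]
        exact hz
    set e' : Fin n ≃ V := Fin.revPerm.trans e with he'
    have he'app : ∀ i : Fin n, e' i = e i.rev := fun i => rfl
    have hr : ∀ j : Fin n, 0 < j.val → ∃ i : Fin n, i < j ∧ G.Adj (e' i) (e' j) := by
      intro j hj
      have hyL : e' j ∈ L := hall _
      have hyne : e' j ≠ v := by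
        intro h
        rw [he'app, ← hel] at h
        have h2 := e.injective h
        have h3 := congrArg Fin.val h2
        rw [Fin.val_rev] at h3
        have := j.isLt
        simp at h3
        omega
      obtain ⟨z, hz, hp⟩ := hL.2.2.2.2 (e' j) hyL hyne
      have hzL : z ∈ L := hp.subset (by simp)
      have hzlt : L.idxOf z < L.length := List.idxOf_lt_length_iff.mpr hzL
      set k : Fin n := ⟨L.idxOf z, by rw [← hlen]; exact hzlt⟩ with hk
      have hek : e k = z := by
        rw [heget]
        exact List.idxOf_get hzlt
      have hklt : j.rev < k := by
        have h1 := pair_sublist_indexOf hL.1 hp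
        rw [he'app] at h1
        have h2 : L.idxOf (e j.rev) = j.rev.val := hidx j.rev
        rw [h2] at h1
        exact h1
      refine ⟨k.rev, ?_, ?_⟩
      · rw [← Fin.rev_rev j]
        exact Fin.rev_lt_rev.mpr hklt
      · rw [he'app, Fin.rev_rev, hek, he'app]
        exact hz.symm
    obtain ⟨x, πl, hcovl, hordl⟩ := exists_traversal_walk hnpos G e hl
    obtain ⟨y, πr, hcovr, hordr⟩ := exists_traversal_walk hnpos G e' hr
    have he'0 : e' ⟨0, hnpos⟩ = v := by
      rw [he'app, ← hel]
      have hre : (⟨0, hnpos⟩ : Fin n).rev = ⟨n - 1, by omega⟩ := Fin.ext (by simp [Fin.val_rev])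
      rw [hre]
    subst he0
    subst hel
    refine ⟨e, rfl, rfl, ⟨x, πl, ?_, hordl⟩, ⟨y, πr.copy he'0 rfl, ?_, ?_⟩⟩
    · intro z
      have h1 := hcovl (e.symm z)
      rwa [e.apply_symm_apply] at h1
    · intro z
      rw [SimpleGraph.Walk.support_copy]
      have h1 := hcovr (e'.symm z)
      rwa [e'.apply_symm_apply] at h1
    · intro i j hij
      rw [SimpleGraph.Walk.support_copy]
      have h1 := hordr j.rev i.rev (Fin.rev_lt_rev.mpr hij)
      simp only [he'app, Fin.rev_rev] at h1
      exact h1
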